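/- arXiv:2010.10798 — 3 statements merged into one kernel-verified Lean document; each statement's English description precedes it below -/
import Mathlib

section
/- Let E ⊆ Ω be a measurable set and let (V_k) be a sequence of measurable functions on Ω with 0 ≤ V_k ≤ 1 a.e. converging weak-* in L^∞(Ω) to a measurable function V∞ with 0 ≤ V∞ ≤ 1 a.e. Then ‖V_k − 1_E‖_{L¹(Ω)} → ‖V∞ − 1_E‖_{L¹(Ω)} as k → ∞. In particular, if V∞ = 1_E a.e., then V_k → 1_E strongly in L¹(Ω). -/
open MeasureTheory Filter

/-- If `0 ≤ V_k ≤ 1` a.e. converge weak-* in `L^∞(Ω)` to `V∞` with `0 ≤ V∞ ≤ 1` a.e.,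
then `‖V_k − 1_E‖_{L¹(Ω)} → ‖V∞ − 1_E‖_{L¹(Ω)}`; in particular, if `V∞ = 1_E` a.e.
then `V_k → 1_E` strongly in `L¹(Ω)`. -/
theorem L1_convergence_to_indicator
    (d : ℕ) (hd : 1 ≤ d)
    (Ω : Set (EuclideanSpace ℝ (Fin d))) (hΩo : IsOpen Ω) (hΩne : Ω.Nonempty)
    (hΩb : Bornology.IsBounded Ω)
    (E : Set (EuclideanSpace ℝ (Fin d))) (hE : MeasurableSet E) (hEΩ : E ⊆ Ω)
    (V : ℕ → (EuclideanSpace ℝ (Fin d) → ℝ))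
    (hVmeas : ∀ k, Measurable (V k))
    (hVbd : ∀ k, ∀ᵐ x ∂(volume.restrict Ω), 0 ≤ V k x ∧ V k x ≤ 1)
    (Vinf : EuclideanSpace ℝ (Fin d) → ℝ)
    (hVinfmeas : Measurable Vinf)
    (hVinfbd : ∀ᵐ x ∂(volume.restrict Ω), 0 ≤ Vinf x ∧ Vinf x ≤ 1)
    (hconv : ∀ g : EuclideanSpace ℝ (Fin d) → ℝ, Integrable g (volume.restrict Ω) →
      Tendsto (fun k => ∫ x in Ω, V k x * g x) atTop
        (nhds (∫ x in Ω, Vinf x * g x))) :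
    Tendsto (fun k => ∫ x in Ω, |V k x - E.indicator (fun _ => (1 : ℝ)) x|) atTop
      (nhds (∫ x in Ω, |Vinf x - E.indicator (fun _ => (1 : ℝ)) x|)) ∧
    ((∀ᵐ x ∂(volume.restrict Ω), Vinf x = E.indicator (fun _ => (1 : ℝ)) x) →
      Tendsto (fun k => ∫ x in Ω, |V k x - E.indicator (fun _ => (1 : ℝ)) x|) atTop
        (nhds 0)) := by
  set I : EuclideanSpace ℝ (Fin d) → ℝ := E.indicator (fun _ => (1 : ℝ)) with hI
  haveI : IsFiniteMeasure (volume.restrict Ω) :=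
    ⟨by rw [Measure.restrict_apply_univ]; exact hΩb.measure_lt_top⟩
  have hImeas : Measurable I := measurable_const.indicator hE
  have hIint : Integrable I (volume.restrict Ω) := (integrable_const 1).indicator hE
  set g : EuclideanSpace ℝ (Fin d) → ℝ := fun x => 1 - 2 * I x with hgdef
  have hgmeas : Measurable g := measurable_const.sub (measurable_const.mul hImeas)
  have hgint : Integrable g (volume.restrict Ω) := (integrable_const 1).sub (hIint.const_mul 2)
  have key : ∀ (W : EuclideanSpace ℝ (Fin d) → ℝ), Measurable W →
      (∀ᵐ x ∂(volume.restrict Ω), 0 ≤ W x ∧ W x ≤ 1) →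
      ∫ x in Ω, |W x - I x| = (∫ x in Ω, W x * g x) + ∫ x in Ω, I x := by
    intro W hWm hWb
    have hint : Integrable (fun x => W x * g x) (volume.restrict Ω) := by
      refine Integrable.mono hgint ((hWm.mul hgmeas).aestronglyMeasurable) ?_
      filter_upwards [hWb] with x hx
      rw [norm_mul]
      calc ‖W x‖ * ‖g x‖ ≤ 1 * ‖g x‖ := by
            apply mul_le_mul_of_nonneg_right _ (norm_nonneg _)
            rw [Real.norm_eq_abs, abs_of_nonneg hx.1]; exact hx.2
        _ = ‖g x‖ := one_mul _
    have hcong : ∀ᵐ x ∂(volume.restrict Ω), |W x - I x| = W x * g x + I x := by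
      filter_upwards [hWb] with x hx
      by_cases hxE : x ∈ E
      · simp only [hgdef, hI, Set.indicator_of_mem hxE]
        rw [abs_sub_comm, abs_of_nonneg (by linarith [hx.2])]; ring
      · simp only [hgdef, hI, Set.indicator_of_notMem hxE]
        rw [sub_zero, abs_of_nonneg hx.1]; ring
    rw [integral_congr_ae hcong, integral_add hint hIint]
  have main : Tendsto (fun k => ∫ x in Ω, |V k x - I x|) atTop
      (nhds (∫ x in Ω, |Vinf x - I x|)) := by
    rw [key Vinf hVinfmeas hVinfbd]
    have heq : (fun k => ∫ x in Ω, |V k x - I x|)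
        = fun k => (∫ x in Ω, V k x * g x) + ∫ x in Ω, I x :=
      funext fun k => key (V k) (hVmeas k) (hVbd k)
    rw [heq]
    exact (hconv g hgint).add_const _
  refine ⟨main, fun hae => ?_⟩
  have hzero : ∫ x in Ω, |Vinf x - I x| = 0 := by
    have : ∀ᵐ x ∂(volume.restrict Ω), |Vinf x - I x| = 0 := by
      filter_upwards [hae] with x hx; rw [hx, sub_self, abs_zero]
    rw [integral_congr_ae this, integral_zero]
  rw [← hzero]; exact main
end

section
/- Let f ∈ L¹(Ω) be real-valued, let F ⊆ Ω be measurable with |F| = V₀, and let δ > 0 be such that the constraint set M(δ) := {V ∈ M : ‖V − 1_F‖_{L¹(Ω)} = δ} is nonempty. Then the optimisation problem sup_{V ∈ M(δ)} ∫_Ω f V is attained: there exists 𝒱 ∈ M(δ) with ∫_Ω f 𝒱 ≥ ∫_Ω f V for every V ∈ M(δ). -/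
open MeasureTheory

/-- The admissible class `M` of potentials. -/
def Adm (d : ℕ) (Ω : Set (EuclideanSpace ℝ (Fin d))) (V₀ : ℝ) :
    Set (EuclideanSpace ℝ (Fin d) → ℝ) :=
  { V | Measurable V ∧ (∀ᵐ x ∂(volume.restrict Ω), 0 ≤ V x ∧ V x ≤ 1) ∧
    (∫ x in Ω, V x) = V₀ }

/-!
For `0 ≤ V ≤ 1` and `|F| = V₀` one has `‖V - 1_F‖₁ = V₀ - ∫_F V + ∫_{Ω \ F} V`, so together with
`∫_Ω V = V₀` the constraint says exactly `∫_F V = V₀ - δ/2` and `∫_{Ω \ F} V = δ/2`. The problem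
therefore splits into two independent bathtub problems, on `F` and on `Ω \ F`. Each is solved by
the indicator of a set `E` with `{f > t} ⊆ E ⊆ {f ≥ t}` of the prescribed measure, because
`(f - t) (1_E - V) ≥ 0` pointwise; such an `E` exists since Lebesgue measure has no atoms. Gluing
the two maximisers along `F` gives the maximiser.
-/

open Set Filter Topology
open scoped ENNReal

section Bathtub

variable {X : Type*} [MeasurableSpace X] {μ : Measure X}

def bathtubSet (μ : Measure X) (c : ℝ) : Set (X → ℝ) :=
  { V | Measurable V ∧ (∀ᵐ x ∂μ, 0 ≤ V x ∧ V x ≤ 1) ∧ ∫ x, V x ∂μ = c }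

def HasIntermediateSubsets (μ : Measure X) : Prop :=
  ∀ s, MeasurableSet s → ∀ m ≤ μ s, ∃ t ⊆ s, MeasurableSet t ∧ μ t = m

lemma ae_norm_le_one_of_bounds {V : X → ℝ} (hV : ∀ᵐ x ∂μ, 0 ≤ V x ∧ V x ≤ 1) :
    ∀ᵐ x ∂μ, ‖V x‖ ≤ 1 := by
  filter_upwards [hV] with x hx
  exact abs_le.2 ⟨by linarith [hx.1], hx.2⟩

lemma integrable_of_ae_bounds [IsFiniteMeasure μ] {V : X → ℝ} (hVm : Measurable V)
    (hV : ∀ᵐ x ∂μ, 0 ≤ V x ∧ V x ≤ 1) : Integrable V μ :=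
  .of_bound hVm.aestronglyMeasurable 1 (ae_norm_le_one_of_bounds hV)

lemma MeasureTheory.Integrable.mul_of_ae_bounds {f V : X → ℝ} (hf : Integrable f μ)
    (hVm : Measurable V) (hV : ∀ᵐ x ∂μ, 0 ≤ V x ∧ V x ≤ 1) :
    Integrable (fun x ↦ f x * V x) μ :=
  hf.mul_bdd hVm.aestronglyMeasurable (ae_norm_le_one_of_bounds hV)

lemma integrable_of_mem_bathtubSet [IsFiniteMeasure μ] {V : X → ℝ} {c : ℝ}
    (hV : V ∈ bathtubSet μ c) : Integrable V μ :=
  integrable_of_ae_bounds hV.1 hV.2.1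

lemma indicator_one_mem_bathtubSet {E : Set X} (hE : MeasurableSet E) :
    E.indicator (fun _ ↦ (1 : ℝ)) ∈ bathtubSet μ (μ.real E) :=
  ⟨measurable_const.indicator hE, .of_forall fun x ↦ ⟨indicator_nonneg (fun _ _ ↦ zero_le_one) x,
    indicator_le_self' (fun _ _ ↦ zero_le_one) x⟩, by simp [integral_indicator hE]⟩

lemma mem_bathtubSet_of_ae_eq {V W : X → ℝ} {c : ℝ} (hVm : Measurable V)
    (hW : W ∈ bathtubSet μ c) (hVW : V =ᵐ[μ] W) : V ∈ bathtubSet μ c := by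
  refine ⟨hVm, ?_, (integral_congr_ae hVW).trans hW.2.2⟩
  filter_upwards [hW.2.1, hVW] with x hx hxe
  rwa [hxe]

lemma integral_mul_eq_of_ae_le_of_mem_bathtubSet [IsFiniteMeasure μ] {f V W : X → ℝ} {c : ℝ}
    (hV : V ∈ bathtubSet μ c) (hW : W ∈ bathtubSet μ c) (hVW : V ≤ᵐ[μ] W) :
    ∫ x, f x * V x ∂μ = ∫ x, f x * W x ∂μ := by
  have hae : V =ᵐ[μ] W := (integral_eq_iff_of_ae_le (integrable_of_mem_bathtubSet hV)
    (integrable_of_mem_bathtubSet hW) hVW).1 (hV.2.2.trans hW.2.2.symm)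
  exact integral_congr_ae (EventuallyEq.rfl.mul hae)

lemma measure_lt_le_of_forall_gt {f : X → ℝ} {t : ℝ} {m : ℝ≥0∞}
    (h : ∀ s > t, μ {x | s < f x} ≤ m) : μ {x | t < f x} ≤ m := by
  obtain ⟨u, hu_anti, hu_gt, hu_lim⟩ := exists_seq_strictAnti_tendsto t
  have hunion : {x | t < f x} = ⋃ n, {x | u n < f x} := by
    ext x
    simp only [mem_ofPred_eq, mem_iUnion]
    exact ⟨fun hx ↦ (hu_lim.eventually (gt_mem_nhds hx)).exists,
      fun ⟨n, hn⟩ ↦ (hu_gt n).trans hn⟩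
  have hmono : Monotone fun n ↦ {x | u n < f x} :=
    fun i j hij x hx ↦ (hu_anti.antitone hij).trans_lt hx
  rw [hunion, hmono.measure_iUnion]
  exact iSup_le fun n ↦ h _ (hu_gt n)

lemma le_measure_le_of_forall_lt [IsFiniteMeasure μ] {f : X → ℝ} (hf : Measurable f) {t : ℝ}
    {m : ℝ≥0∞} (h : ∀ s < t, m ≤ μ {x | s < f x}) : m ≤ μ {x | t ≤ f x} := by
  obtain ⟨u, hu_mono, hu_lt, hu_lim⟩ := exists_seq_strictMono_tendsto t
  have hinter : {x | t ≤ f x} = ⋂ n, {x | u n < f x} := by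
    ext x
    simp only [mem_ofPred_eq, mem_iInter]
    exact ⟨fun hx n ↦ (hu_lt n).trans_le hx,
      fun hx ↦ le_of_tendsto' hu_lim fun n ↦ (hx n).le⟩
  have hanti : Antitone fun n ↦ {x | u n < f x} :=
    fun i j hij x hx ↦ (hu_mono.monotone hij).trans_lt hx
  rw [hinter, hanti.measure_iInter
    (fun n ↦ (measurableSet_lt measurable_const hf).nullMeasurableSet) ⟨0, measure_ne_top _ _⟩]
  exact le_iInf fun n ↦ h _ (hu_lt n)

theorem exists_measure_lt_le_le_measure_le [IsFiniteMeasure μ] {f : X → ℝ} (hf : Measurable f)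
    {m : ℝ≥0∞} (hm₀ : 0 < m) (hm : m < μ univ) :
    ∃ t, μ {x | t < f x} ≤ m ∧ m ≤ μ {x | t ≤ f x} := by
  set S := {t : ℝ | μ {x | t < f x} ≤ m}
  have hanti : Antitone fun t : ℝ ↦ {x | t < f x} := fun s t hst x hx ↦ hst.trans_lt hx
  have hS : S.Nonempty := by
    have hinf : ⨅ t : ℝ, μ {x | t < f x} = 0 := by
      rw [← hanti.measure_iInter
        (fun t ↦ (measurableSet_lt measurable_const hf).nullMeasurableSet) ⟨0, measure_ne_top _ _⟩]
      convert measure_empty (μ := μ)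
      exact iInter_eq_empty_iff.2 fun x ↦ ⟨f x, (lt_irrefl (f x) ·)⟩
    obtain ⟨t, ht⟩ := iInf_lt_iff.1 (hinf ▸ hm₀)
    exact ⟨t, ht.le⟩
  have hS_bdd : BddBelow S := by
    have hsup : ⨆ t : ℝ, μ {x | t < f x} = μ univ := by
      rw [← hanti.measure_iUnion]
      congr 1
      exact iUnion_eq_univ_iff.2 fun x ↦ ⟨f x - 1, sub_one_lt (f x)⟩
    obtain ⟨t, ht⟩ := lt_iSup_iff.1 (hsup ▸ hm)
    exact ⟨t, fun s hs ↦ le_of_not_gt fun hst ↦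
      (ht.trans_le (measure_mono (hanti hst.le))).not_ge hs⟩
  refine ⟨sInf S, measure_lt_le_of_forall_gt fun s hs ↦ ?_,
    le_measure_le_of_forall_lt hf fun s hs ↦ ?_⟩
  · obtain ⟨r, hr, hrs⟩ := (csInf_lt_iff hS_bdd hS).1 hs
    exact (measure_mono (hanti hrs.le)).trans hr
  · exact (not_le.1 fun h ↦ notMem_of_lt_csInf hs hS_bdd h).le

theorem exists_superlevel_measure_eq [IsFiniteMeasure μ] (hμ : HasIntermediateSubsets μ)
    {f : X → ℝ} (hf : Measurable f) {m : ℝ≥0∞} (hm₀ : 0 < m) (hm : m < μ univ) :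
    ∃ t, ∃ E, MeasurableSet E ∧ μ E = m ∧ {x | t < f x} ⊆ E ∧ E ⊆ {x | t ≤ f x} := by
  obtain ⟨t, hlt, hle⟩ := exists_measure_lt_le_le_measure_le hf hm₀ hm
  have hU : MeasurableSet {x | t < f x} := measurableSet_lt measurable_const hf
  have hL : MeasurableSet {x | f x = t} := measurableSet_eq_fun hf measurable_const
  have hgap : m - μ {x | t < f x} ≤ μ {x | f x = t} := by
    rw [tsub_le_iff_left]
    refine hle.trans ((measure_mono fun x (hx : t ≤ f x) ↦ ?_).trans (measure_union_le _ _))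
    rcases hx.lt_or_eq with hx | hx
    exacts [Or.inl hx, Or.inr hx.symm]
  obtain ⟨E', hE'L, hE', hμE'⟩ := hμ _ hL _ hgap
  refine ⟨t, {x | t < f x} ∪ E', hU.union hE', ?_, subset_union_left, ?_⟩
  · have hdisj : Disjoint {x | t < f x} E' :=
      disjoint_left.2 fun x hx hx' ↦ (show t < f x from hx).ne' (hE'L hx')
    rw [measure_union hdisj hE', hμE', add_tsub_cancel_of_le hlt]
  · rintro x (hx | hx)
    exacts [(show t < f x from hx).le, (hE'L hx).ge]

theorem hasIntermediateSubsets_of_absolutelyContinuous {E : Type*} [NormedAddCommGroup E]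
    [NormedSpace ℝ E] [MeasurableSpace E] [BorelSpace E] [FiniteDimensional ℝ E] [Nontrivial E]
    {μ ν : Measure E} [IsFiniteMeasure μ] [ν.IsAddHaarMeasure] (hμν : μ ≪ ν) :
    HasIntermediateSubsets μ := by
  intro s hs m hm
  rcases eq_or_ne m 0 with rfl | hm₀
  · exact ⟨∅, empty_subset _, .empty, measure_empty⟩
  rcases hm.eq_or_lt with rfl | hm
  · exact ⟨s, subset_rfl, hs, rfl⟩
  -- cut `s` by a centred closed ball; its boundary sphere is null
  rw [← Measure.restrict_apply_univ] at hm
  obtain ⟨t, hlt, hle⟩ := exists_measure_lt_le_le_measure_le (μ := μ.restrict s)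
    measurable_norm.neg (pos_iff_ne_zero.2 hm₀) hm
  have hT : MeasurableSet {x : E | t ≤ -‖x‖} :=
    measurableSet_le measurable_const measurable_norm.neg
  refine ⟨{x | t ≤ -‖x‖} ∩ s, inter_subset_right, hT.inter hs, ?_⟩
  rw [← Measure.restrict_apply hT]
  refine le_antisymm ?_ hle
  have hsphere : μ.restrict s (Metric.sphere 0 (-t)) = 0 :=
    Measure.restrict_le_self.absolutelyContinuous (hμν (Measure.addHaar_sphere ν 0 (-t)))
  calc μ.restrict s {x | t ≤ -‖x‖}
      ≤ μ.restrict s ({x | t < -‖x‖} ∪ Metric.sphere 0 (-t)) := by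
        refine measure_mono fun x (hx : t ≤ -‖x‖) ↦ ?_
        rcases hx.lt_or_eq with hx | hx
        exacts [Or.inl hx, Or.inr (by simp [hx])]
    _ ≤ m := (measure_union_le _ _).trans (by rw [hsphere, add_zero]; exact hlt)

lemma integral_mul_le_of_superlevel [IsFiniteMeasure μ] {f V : X → ℝ} (hf : Integrable f μ)
    {t : ℝ} {E : Set X} (hE : MeasurableSet E) (hlt : {x | t < f x} ⊆ E)
    (hle : E ⊆ {x | t ≤ f x}) (hV : V ∈ bathtubSet μ (μ.real E)) :
    ∫ x, f x * V x ∂μ ≤ ∫ x, f x * E.indicator (fun _ ↦ (1 : ℝ)) x ∂μ := by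
  obtain ⟨hVm, hVb, hVint⟩ := hV
  set I := E.indicator fun _ ↦ (1 : ℝ)
  obtain ⟨hIm, hIb, hIint⟩ : I ∈ bathtubSet μ (μ.real E) := indicator_one_mem_bathtubSet hE
  -- `1_E - V` has the sign of `f - t`
  have hpos : 0 ≤ ∫ x, (f x - t) * (I x - V x) ∂μ := by
    refine integral_nonneg_of_ae ?_
    filter_upwards [hVb] with x hx
    rw [Pi.zero_apply]
    by_cases hxE : x ∈ E
    · rw [show I x = 1 from indicator_of_mem hxE _]
      exact mul_nonneg (sub_nonneg.2 (hle hxE)) (sub_nonneg.2 hx.2)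
    · rw [show I x = 0 from indicator_of_notMem hxE _, zero_sub]
      exact mul_nonneg_of_nonpos_of_nonpos (sub_nonpos.2 (not_lt.1 fun h ↦ hxE (hlt h)))
        (neg_nonpos.2 hx.1)
  have hfI : Integrable (fun x ↦ f x * I x) μ := hf.mul_of_ae_bounds hIm hIb
  have hfV : Integrable (fun x ↦ f x * V x) μ := hf.mul_of_ae_bounds hVm hVb
  have hIV : Integrable (fun x ↦ I x - V x) μ :=
    (integrable_of_ae_bounds hIm hIb).sub (integrable_of_ae_bounds hVm hVb)
  have hfIV : Integrable (fun x ↦ f x * I x - f x * V x) μ := hfI.sub hfV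
  have hexpand : ∫ x, (f x - t) * (I x - V x) ∂μ
      = (∫ x, f x * I x ∂μ - ∫ x, f x * V x ∂μ) - t * (∫ x, I x ∂μ - ∫ x, V x ∂μ) := by
    have hring : ∀ x, (f x - t) * (I x - V x) = (f x * I x - f x * V x) - t * (I x - V x) :=
      fun x ↦ by ring
    simp_rw [hring]
    rw [integral_sub hfIV (hIV.const_mul t), integral_sub hfI hfV, integral_const_mul,
      integral_sub (integrable_of_ae_bounds hIm hIb) (integrable_of_ae_bounds hVm hVb)]
  rw [hexpand, hIint, hVint] at hpos
  linarith

theorem exists_isMaxOn_integral_mul_bathtubSet [IsFiniteMeasure μ] (hμ : HasIntermediateSubsets μ)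
    {f : X → ℝ} (hf : Integrable f μ) {c : ℝ} (hc : (bathtubSet μ c).Nonempty) :
    ∃ V ∈ bathtubSet μ c, IsMaxOn (fun V ↦ ∫ x, f x * V x ∂μ) (bathtubSet μ c) V := by
  wlog hfm : Measurable f generalizing f
  · obtain ⟨V, hV, hmax⟩ :=
      this (hf.congr hf.1.ae_eq_mk) hf.1.stronglyMeasurable_mk.measurable
    have hcongr : ∀ W : X → ℝ, ∫ x, f x * W x ∂μ = ∫ x, hf.1.mk f x * W x ∂μ :=
      fun W ↦ integral_congr_ae (hf.1.ae_eq_mk.mul EventuallyEq.rfl)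
    exact ⟨V, hV, fun W hW ↦ by simpa only [hcongr] using hmax hW⟩
  obtain ⟨W₀, hW₀m, hW₀b, hW₀int⟩ := hc
  have hc₀ : 0 ≤ c := hW₀int ▸ integral_nonneg_of_ae (hW₀b.mono fun x hx ↦ hx.1)
  have hc₁ : c ≤ μ.real univ := by
    simpa [hW₀int] using integral_mono_ae (integrable_of_ae_bounds hW₀m hW₀b)
      (integrable_const (1 : ℝ)) (hW₀b.mono fun x hx ↦ hx.2)
  suffices ∃ E, MeasurableSet E ∧ μ.real E = c ∧
      ∀ W ∈ bathtubSet μ c, ∫ x, f x * W x ∂μ ≤ ∫ x, f x * E.indicator (fun _ ↦ (1 : ℝ)) x ∂μ by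
    obtain ⟨E, hE, rfl, hmax⟩ := this
    exact ⟨_, indicator_one_mem_bathtubSet hE, hmax⟩
  rcases hc₀.eq_or_lt with rfl | hc₀
  · have hempty := indicator_one_mem_bathtubSet (μ := μ) MeasurableSet.empty
    rw [measureReal_empty] at hempty
    exact ⟨∅, .empty, measureReal_empty, fun W hW ↦ (integral_mul_eq_of_ae_le_of_mem_bathtubSet
      hempty hW (hW.2.1.mono fun x hx ↦ by simp [hx.1])).ge⟩
  rcases hc₁.eq_or_lt with rfl | hc₁
  · have huniv := indicator_one_mem_bathtubSet (μ := μ) MeasurableSet.univ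
    exact ⟨univ, .univ, rfl, fun W hW ↦ (integral_mul_eq_of_ae_le_of_mem_bathtubSet
      hW huniv (hW.2.1.mono fun x hx ↦ by simp [hx.2])).le⟩
  obtain ⟨t, E, hE, hμE, hlt, hle⟩ := exists_superlevel_measure_eq hμ hfm
    (ENNReal.ofReal_pos.2 hc₀) ((ENNReal.ofReal_lt_iff_lt_toReal hc₀.le (measure_ne_top _ _)).2 hc₁)
  have hμE' : μ.real E = c := by rw [measureReal_def, hμE, ENNReal.toReal_ofReal hc₀.le]
  exact ⟨E, hE, hμE', fun W hW ↦ integral_mul_le_of_superlevel hf hE hlt hle (hμE' ▸ hW)⟩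

lemma integral_abs_sub_indicator_one [IsFiniteMeasure μ] {V : X → ℝ} (hVm : Measurable V)
    (hV : ∀ᵐ x ∂μ, 0 ≤ V x ∧ V x ≤ 1) {F : Set X} (hF : MeasurableSet F) :
    ∫ x, |V x - F.indicator (fun _ ↦ (1 : ℝ)) x| ∂μ
      = μ.real F - ∫ x in F, V x ∂μ + ∫ x in Fᶜ, V x ∂μ := by
  have hVi := integrable_of_ae_bounds hVm hV
  have hIi := integrable_of_mem_bathtubSet (indicator_one_mem_bathtubSet (μ := μ) hF)
  have hin : ∫ x in F, |V x - F.indicator (fun _ ↦ (1 : ℝ)) x| ∂μ = ∫ x in F, (1 - V x) ∂μ := by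
    refine setIntegral_congr_ae hF ?_
    filter_upwards [hV] with x hx hxF
    rw [indicator_of_mem hxF, abs_of_nonpos (by linarith [hx.2])]
    ring
  have hout : ∫ x in Fᶜ, |V x - F.indicator (fun _ ↦ (1 : ℝ)) x| ∂μ = ∫ x in Fᶜ, V x ∂μ := by
    refine setIntegral_congr_ae hF.compl ?_
    filter_upwards [hV] with x hx hxF
    rw [indicator_of_notMem hxF, sub_zero, abs_of_nonneg hx.1]
  have hAbs : Integrable (fun x ↦ |V x - F.indicator (fun _ ↦ (1 : ℝ)) x|) μ := (hVi.sub hIi).abs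
  rw [← integral_add_compl hF hAbs, hin, hout,
    integral_sub (integrable_const 1) hVi.integrableOn, setIntegral_const, smul_eq_mul, mul_one]

theorem mem_bathtubSet_and_integral_abs_sub_indicator_iff [IsFiniteMeasure μ] {F : Set X}
    (hF : MeasurableSet F) {c δ : ℝ} (hFc : μ.real F = c) {V : X → ℝ} :
    (V ∈ bathtubSet μ c ∧ ∫ x, |V x - F.indicator (fun _ ↦ (1 : ℝ)) x| ∂μ = δ) ↔
      V ∈ bathtubSet (μ.restrict F) (c - δ / 2) ∩ bathtubSet (μ.restrict Fᶜ) (δ / 2) := by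
  constructor
  · rintro ⟨⟨hVm, hVb, hVint⟩, hδ⟩
    have hsum := integral_add_compl hF (integrable_of_ae_bounds hVm hVb)
    rw [integral_abs_sub_indicator_one hVm hVb hF, hFc] at hδ
    exact ⟨⟨hVm, ae_restrict_of_ae hVb, by linarith⟩, ⟨hVm, ae_restrict_of_ae hVb, by linarith⟩⟩
  · rintro ⟨⟨hVm, hVb₁, hVint₁⟩, ⟨-, hVb₂, hVint₂⟩⟩
    have hVb := ae_of_ae_restrict_of_ae_restrict_compl F hVb₁ hVb₂
    refine ⟨⟨hVm, hVb, ?_⟩, ?_⟩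
    · rw [← integral_add_compl hF (integrable_of_ae_bounds hVm hVb), hVint₁, hVint₂]
      ring
    · rw [integral_abs_sub_indicator_one hVm hVb hF, hFc, hVint₁, hVint₂]
      ring

theorem exists_isMaxOn_integral_mul_bathtubSet_inter [IsFiniteMeasure μ] {F : Set X}
    (hF : MeasurableSet F) (hμF : HasIntermediateSubsets (μ.restrict F))
    (hμFc : HasIntermediateSubsets (μ.restrict Fᶜ)) {f : X → ℝ} (hf : Integrable f μ) {a b : ℝ}
    (hne : (bathtubSet (μ.restrict F) a ∩ bathtubSet (μ.restrict Fᶜ) b).Nonempty) :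
    ∃ V ∈ bathtubSet (μ.restrict F) a ∩ bathtubSet (μ.restrict Fᶜ) b,
      IsMaxOn (fun V ↦ ∫ x, f x * V x ∂μ)
        (bathtubSet (μ.restrict F) a ∩ bathtubSet (μ.restrict Fᶜ) b) V := by
  classical
  obtain ⟨W₀, hW₀₁, hW₀₂⟩ := hne
  obtain ⟨V₁, hV₁, hmax₁⟩ := exists_isMaxOn_integral_mul_bathtubSet hμF hf.restrict ⟨W₀, hW₀₁⟩
  obtain ⟨V₂, hV₂, hmax₂⟩ := exists_isMaxOn_integral_mul_bathtubSet hμFc hf.restrict ⟨W₀, hW₀₂⟩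
  have h₁ : F.piecewise V₁ V₂ =ᵐ[μ.restrict F] V₁ := piecewise_ae_eq_restrict hF
  have h₂ : F.piecewise V₁ V₂ =ᵐ[μ.restrict Fᶜ] V₂ := piecewise_ae_eq_restrict_compl hF
  have hVm : Measurable (F.piecewise V₁ V₂) := hV₁.1.piecewise hF hV₂.1
  have hsplit : ∀ W ∈ bathtubSet (μ.restrict F) a ∩ bathtubSet (μ.restrict Fᶜ) b,
      ∫ x in F, f x * W x ∂μ + ∫ x in Fᶜ, f x * W x ∂μ = ∫ x, f x * W x ∂μ :=
    fun W hW ↦ integral_add_compl hF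
      (hf.mul_of_ae_bounds hW.1.1 (ae_of_ae_restrict_of_ae_restrict_compl F hW.1.2.1 hW.2.2.1))
  have hmem : F.piecewise V₁ V₂ ∈ bathtubSet (μ.restrict F) a ∩ bathtubSet (μ.restrict Fᶜ) b :=
    ⟨mem_bathtubSet_of_ae_eq hVm hV₁ h₁, mem_bathtubSet_of_ae_eq hVm hV₂ h₂⟩
  refine ⟨_, hmem, fun W hW ↦ ?_⟩
  calc ∫ x, f x * W x ∂μ = ∫ x in F, f x * W x ∂μ + ∫ x in Fᶜ, f x * W x ∂μ := (hsplit W hW).symm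
    _ ≤ ∫ x in F, f x * V₁ x ∂μ + ∫ x in Fᶜ, f x * V₂ x ∂μ := add_le_add (hmax₁ hW.1) (hmax₂ hW.2)
    _ = ∫ x, f x * F.piecewise V₁ V₂ x ∂μ := by
      rw [← hsplit _ hmem]
      congr 1
      exacts [integral_congr_ae (EventuallyEq.rfl.mul h₁.symm),
        integral_congr_ae (EventuallyEq.rfl.mul h₂.symm)]

end Bathtub

theorem bathtub_constrained_sup_attained_general
    (d : ℕ) (hd : 1 ≤ d)
    (Ω : Set (EuclideanSpace ℝ (Fin d)))
    (hΩb : Bornology.IsBounded Ω)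
    (V₀ : ℝ) (hV₀ : 0 < V₀)
    (f : EuclideanSpace ℝ (Fin d) → ℝ) (hf : IntegrableOn f Ω)
    (F : Set (EuclideanSpace ℝ (Fin d))) (hF : MeasurableSet F) (hFΩ : F ⊆ Ω)
    (hFvol : volume F = ENNReal.ofReal V₀)
    (δ : ℝ)
    (hne : ∃ V ∈ Adm d Ω V₀,
      (∫ x in Ω, |V x - F.indicator (fun _ => (1 : ℝ)) x|) = δ) :
    ∃ 𝒱 ∈ Adm d Ω V₀,
      (∫ x in Ω, |𝒱 x - F.indicator (fun _ => (1 : ℝ)) x|) = δ ∧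
      ∀ V ∈ Adm d Ω V₀,
        (∫ x in Ω, |V x - F.indicator (fun _ => (1 : ℝ)) x|) = δ →
        (∫ x in Ω, f x * V x) ≤ ∫ x in Ω, f x * 𝒱 x := by
  have : Nonempty (Fin d) := ⟨⟨0, hd⟩⟩
  have : IsFiniteMeasure (volume.restrict Ω) := isFiniteMeasure_restrict.2 hΩb.measure_lt_top.ne
  have hFreal : (volume.restrict Ω).real F = V₀ := by
    rw [measureReal_restrict_apply hF, inter_eq_left.2 hFΩ, measureReal_def, hFvol,
      ENNReal.toReal_ofReal hV₀.le]
  have hsplit (V : EuclideanSpace ℝ (Fin d) → ℝ) :=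
    mem_bathtubSet_and_integral_abs_sub_indicator_iff (V := V) (δ := δ) hF hFreal
  have hdiv (s : Set (EuclideanSpace ℝ (Fin d))) :
      HasIntermediateSubsets ((volume.restrict Ω).restrict s) :=
    hasIntermediateSubsets_of_absolutelyContinuous (ν := volume)
      (Measure.restrict_le_self.trans Measure.restrict_le_self).absolutelyContinuous
  -- `Adm d Ω V₀` is `bathtubSet (volume.restrict Ω) V₀` by definition
  obtain ⟨W, hW⟩ := hne
  obtain ⟨𝒱, h𝒱, hmax⟩ := exists_isMaxOn_integral_mul_bathtubSet_inter hF (hdiv F) (hdiv Fᶜ) hf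
    ⟨W, (hsplit W).1 hW⟩
  exact ⟨𝒱, ((hsplit 𝒱).2 h𝒱).1, ((hsplit 𝒱).2 h𝒱).2,
    fun V hV hVδ ↦ hmax ((hsplit V).1 ⟨hV, hVδ⟩)⟩

/-- The optimisation problem `sup { ∫_Ω f V : V ∈ M, ‖V − 1_F‖_{L¹(Ω)} = δ }`
is attained. -/
theorem bathtub_constrained_sup_attained
    (d : ℕ) (hd : 1 ≤ d)
    (Ω : Set (EuclideanSpace ℝ (Fin d))) (hΩo : IsOpen Ω) (hΩne : Ω.Nonempty)
    (hΩb : Bornology.IsBounded Ω)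
    (V₀ : ℝ) (hV₀ : 0 < V₀) (hV₀' : V₀ < (volume Ω).toReal)
    (f : EuclideanSpace ℝ (Fin d) → ℝ) (hf : IntegrableOn f Ω)
    (F : Set (EuclideanSpace ℝ (Fin d))) (hF : MeasurableSet F) (hFΩ : F ⊆ Ω)
    (hFvol : volume F = ENNReal.ofReal V₀)
    (δ : ℝ) (hδ : 0 < δ)
    (hne : ∃ V ∈ Adm d Ω V₀,
      (∫ x in Ω, |V x - F.indicator (fun _ => (1 : ℝ)) x|) = δ) :
    ∃ 𝒱 ∈ Adm d Ω V₀,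
      (∫ x in Ω, |𝒱 x - F.indicator (fun _ => (1 : ℝ)) x|) = δ ∧
      ∀ V ∈ Adm d Ω V₀,
        (∫ x in Ω, |V x - F.indicator (fun _ => (1 : ℝ)) x|) = δ →
        (∫ x in Ω, f x * V x) ≤ ∫ x in Ω, f x * 𝒱 x :=
  bathtub_constrained_sup_attained_general d hd Ω hΩb V₀ hV₀ f hf F hF hFΩ hFvol δ hne
end

section
/- Let f ∈ L¹(Ω) be real-valued and let μ ∈ ℝ satisfy |{x ∈ Ω : f(x) > μ}| = V₀ and |{x ∈ Ω : f(x) = μ}| = 0; set V_f := 1_{{x : f(x) > μ}} ∈ M. Then the following two assertions are equivalent: (i) there exists c > 0 such that ∫_Ω f V ≤ ∫_Ω f V_f − c ‖V − V_f‖²_{L¹(Ω)} for every V ∈ M; (ii) limsup_{δ → 0⁺} δ^{−2} · sup{∫_Ω f (V − V_f) : V ∈ M, ‖V − V_f‖_{L¹(Ω)} = δ} < 0, where the inner supremum is interpreted as −∞ when the constraint set is empty. -/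
/-!
Both the deficit `g V = ∫_Ω f (V − V_f)` and the distance `ρ V = ‖V − V_f‖_{L¹}` are multiplied
by `t` when `V ∈ M` is replaced by `V_f + t (V − V_f)`, which stays in the convex set `M`. Hence a
bound `g < b ρ²` (`b < 0`) known for `ρ < ε` transfers, through `ρ = ε / 2`, to
`g V < b ε ρ(V) / 2` whenever `ρ(V) ≥ ε`; as `ρ ≤ |Ω|` on `M`, this is again a quadratic bound.
-/

open MeasureTheory Filter

open Set Topology

section NormalizedDeficit

variable {α : Type*} {K : Set α} {g ρ : α → ℝ}

noncomputable def normalizedDeficit (K : Set α) (g ρ : α → ℝ) (δ : ℝ) : EReal :=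
  ⨆ x ∈ {x ∈ K | ρ x = δ}, ((g x / δ ^ 2 : ℝ) : EReal)

theorem limsup_normalizedDeficit_neg {c : ℝ} (hc : 0 < c)
    (h : ∀ x ∈ K, g x ≤ -c * ρ x ^ 2) :
    limsup (normalizedDeficit K g ρ) (𝓝[>] 0) < 0 := by
  have hle : limsup (normalizedDeficit K g ρ) (𝓝[>] 0) ≤ ((-c : ℝ) : EReal) := by
    refine limsup_le_of_le (by isBoundedDefault) ?_
    filter_upwards [self_mem_nhdsWithin] with δ (hδ : 0 < δ)
    refine iSup₂_le fun x ⟨hxK, hxδ⟩ => EReal.coe_le_coe_iff.2 ?_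
    rw [div_le_iff₀ (by positivity), ← hxδ]
    exact h x hxK
  exact hle.trans_lt (by exact_mod_cast neg_lt_zero.2 hc)

theorem exists_lt_mul_sq_of_limsup_normalizedDeficit_neg
    (h : limsup (normalizedDeficit K g ρ) (𝓝[>] 0) < 0) :
    ∃ b < 0, ∃ ε > 0, ∀ x ∈ K, 0 < ρ x → ρ x < ε → g x < b * ρ x ^ 2 := by
  obtain ⟨b, hlim_b, hb⟩ := exists_between h
  lift b to ℝ using ⟨hb.ne_top, (bot_le.trans_lt hlim_b).ne'⟩
  obtain ⟨ε, hε, hsub⟩ :=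
    mem_nhdsGT_iff_exists_Ioo_subset.1 (eventually_lt_of_limsup_lt hlim_b)
  refine ⟨b, by exact_mod_cast hb, ε, hε, fun x hxK hpos hlt => ?_⟩
  have hx : ((g x / ρ x ^ 2 : ℝ) : EReal) < b :=
    (le_iSup₂ (f := fun y (_ : y ∈ {y ∈ K | ρ y = ρ x}) => ((g y / ρ x ^ 2 : ℝ) : EReal))
      x ⟨hxK, rfl⟩).trans_lt (hsub ⟨hpos, hlt⟩)
  exact (div_lt_iff₀ (by positivity)).1 (by exact_mod_cast hx)

theorem exists_le_neg_mul_sq_of_lt_mul_sq {B b ε : ℝ} (hb : b < 0) (hε : 0 < ε)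
    (hρ_nonneg : ∀ x ∈ K, 0 ≤ ρ x) (hρ_le : ∀ x ∈ K, ρ x ≤ B)
    (hzero : ∀ x ∈ K, ρ x = 0 → g x ≤ 0)
    (hscale : ∀ x ∈ K, ∀ t ∈ Ioc (0 : ℝ) 1, ∃ y ∈ K, ρ y = t * ρ x ∧ g y = t * g x)
    (hlocal : ∀ x ∈ K, 0 < ρ x → ρ x < ε → g x < b * ρ x ^ 2) :
    ∃ c > 0, ∀ x ∈ K, g x ≤ -c * ρ x ^ 2 := by
  set M := max B ε
  have hM : 0 < M := hε.trans_le (le_max_right _ _)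
  have hεM : ε ≤ M := le_max_right _ _
  refine ⟨-b * ε / (2 * M), div_pos (mul_pos (neg_pos.2 hb) hε) (by positivity),
    fun x hxK => ?_⟩
  rcases (hρ_nonneg x hxK).eq_or_lt with h0 | hpos
  · simpa [← h0] using hzero x hxK h0.symm
  have hc : -b * ε / (2 * M) ≤ -b := by
    rw [div_le_iff₀ (by positivity)]; nlinarith
  rcases lt_or_ge (ρ x) ε with hsmall | hlarge
  · nlinarith [hlocal x hxK hpos hsmall]
  obtain ⟨y, hyK, hρy, hgy⟩ :=
    hscale x hxK (ε / (2 * ρ x)) ⟨by positivity, by rw [div_le_one (by positivity)]; linarith⟩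
  have hρy' : ρ y = ε / 2 := by rw [hρy]; field_simp
  have hgx : g x < b * ε * ρ x / 2 := by
    have := hlocal y hyK (by linarith) (by linarith)
    rw [hgy, hρy', div_mul_eq_mul_div, div_lt_iff₀ (by positivity)] at this
    nlinarith
  have hxM : ρ x ≤ M := (hρ_le x hxK).trans (le_max_left _ _)
  have : b * ε * ρ x / 2 ≤ -(-b * ε / (2 * M)) * ρ x ^ 2 := by
    have hbερ : b * ε * ρ x < 0 := mul_neg_of_neg_of_pos (mul_neg_of_neg_of_pos hb hε) hpos
    rw [show -(-b * ε / (2 * M)) * ρ x ^ 2 = b * ε * ρ x * ρ x / (2 * M) by ring,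
      le_div_iff₀ (by positivity)]
    nlinarith [mul_le_mul_of_nonpos_left hxM hbερ.le]
  linarith

theorem exists_le_neg_mul_sq_iff_limsup_normalizedDeficit_neg {B : ℝ}
    (hρ_nonneg : ∀ x ∈ K, 0 ≤ ρ x) (hρ_le : ∀ x ∈ K, ρ x ≤ B)
    (hzero : ∀ x ∈ K, ρ x = 0 → g x ≤ 0)
    (hscale : ∀ x ∈ K, ∀ t ∈ Ioc (0 : ℝ) 1, ∃ y ∈ K, ρ y = t * ρ x ∧ g y = t * g x) :
    (∃ c > 0, ∀ x ∈ K, g x ≤ -c * ρ x ^ 2) ↔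
      limsup (normalizedDeficit K g ρ) (𝓝[>] 0) < 0 :=
  ⟨fun ⟨_, hc, h⟩ => limsup_normalizedDeficit_neg hc h, fun h =>
    let ⟨_, hb, _, hε, hlocal⟩ := exists_lt_mul_sq_of_limsup_normalizedDeficit_neg h
    exists_le_neg_mul_sq_of_lt_mul_sq hb hε hρ_nonneg hρ_le hzero hscale hlocal⟩

end NormalizedDeficit

section Admissible

variable {d : ℕ} {Ω : Set (EuclideanSpace ℝ (Fin d))} {V₀ : ℝ}
  {f V W : EuclideanSpace ℝ (Fin d) → ℝ}

theorem abs_le_one_of_mem_Adm (hV : V ∈ Adm d Ω V₀) :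
    ∀ᵐ x ∂volume.restrict Ω, |V x| ≤ 1 := by
  filter_upwards [hV.2.1] with x hx
  exact abs_le.2 ⟨by linarith [hx.1], hx.2⟩

theorem abs_sub_le_one_of_mem_Adm (hV : V ∈ Adm d Ω V₀) (hW : W ∈ Adm d Ω V₀) :
    ∀ᵐ x ∂volume.restrict Ω, |V x - W x| ≤ 1 := by
  filter_upwards [hV.2.1, hW.2.1] with x hVx hWx
  exact abs_le.2 ⟨by linarith [hVx.1, hWx.2], by linarith [hVx.2, hWx.1]⟩

theorem integrableOn_of_mem_Adm (hΩ : volume Ω < ⊤) (hV : V ∈ Adm d Ω V₀) :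
    IntegrableOn V Ω :=
  have : IsFiniteMeasure (volume.restrict Ω) := isFiniteMeasure_restrict.2 hΩ.ne
  (integrable_const (1 : ℝ)).mono' hV.1.aestronglyMeasurable (abs_le_one_of_mem_Adm hV)

theorem IntegrableOn.mul_of_mem_Adm (hf : IntegrableOn f Ω) (hV : V ∈ Adm d Ω V₀) :
    IntegrableOn (fun x => f x * V x) Ω :=
  hf.mul_bdd hV.1.aestronglyMeasurable (abs_le_one_of_mem_Adm hV)

theorem convex_Adm (hΩ : volume Ω < ⊤) : Convex ℝ (Adm d Ω V₀) := by
  intro V hV W hW a b ha hb hab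
  refine ⟨(hV.1.const_smul a).add (hW.1.const_smul b), ?_, ?_⟩
  · filter_upwards [hV.2.1, hW.2.1] with x hVx hWx
    simp only [Pi.add_apply, Pi.smul_apply, smul_eq_mul]
    constructor <;> nlinarith [hVx.1, hVx.2, hWx.1, hWx.2]
  · simp only [Pi.add_apply, Pi.smul_apply, smul_eq_mul]
    rw [integral_add ((integrableOn_of_mem_Adm hΩ hV).const_mul a)
      ((integrableOn_of_mem_Adm hΩ hW).const_mul b), integral_const_mul, integral_const_mul,
      hV.2.2, hW.2.2, ← add_mul, hab, one_mul]

theorem integral_abs_sub_le_of_mem_Adm (hΩ : volume Ω < ⊤) (hV : V ∈ Adm d Ω V₀)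
    (hW : W ∈ Adm d Ω V₀) : ∫ x in Ω, |V x - W x| ≤ volume.real Ω := by
  simpa using (le_abs_self _).trans
    (norm_setIntegral_le_of_norm_le_const_ae (f := fun x => |V x - W x|) (C := 1) hΩ
      (by simpa using abs_sub_le_one_of_mem_Adm hV hW))

theorem integral_mul_sub_eq_zero_of_integral_abs_sub_eq_zero (hΩ : volume Ω < ⊤)
    (hV : V ∈ Adm d Ω V₀) (hW : W ∈ Adm d Ω V₀) (h : ∫ x in Ω, |V x - W x| = 0) :
    ∫ x in Ω, f x * (V x - W x) = 0 := by
  have hVW : ∀ᵐ x ∂volume.restrict Ω, |V x - W x| = 0 :=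
    (integral_eq_zero_iff_of_nonneg (fun x => abs_nonneg _)
      ((integrableOn_of_mem_Adm hΩ hV).sub (integrableOn_of_mem_Adm hΩ hW)).abs).1 h
  refine integral_eq_zero_of_ae ?_
  filter_upwards [hVW] with x hx
  simp [abs_eq_zero.1 hx]

theorem integral_mul_sub_of_mem_Adm (hf : IntegrableOn f Ω) (hV : V ∈ Adm d Ω V₀)
    (hW : W ∈ Adm d Ω V₀) :
    ∫ x in Ω, f x * (V x - W x) = (∫ x in Ω, f x * V x) - ∫ x in Ω, f x * W x := by
  simp only [mul_sub]
  exact integral_sub (IntegrableOn.mul_of_mem_Adm hf hV) (IntegrableOn.mul_of_mem_Adm hf hW)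

theorem exists_mem_Adm_scaled (hΩ : volume Ω < ⊤) (hV : V ∈ Adm d Ω V₀)
    (hW : W ∈ Adm d Ω V₀) (f : EuclideanSpace ℝ (Fin d) → ℝ) {t : ℝ} (ht : t ∈ Icc (0 : ℝ) 1) :
    ∃ U ∈ Adm d Ω V₀, ∫ x in Ω, |U x - W x| = t * ∫ x in Ω, |V x - W x| ∧
      ∫ x in Ω, f x * (U x - W x) = t * ∫ x in Ω, f x * (V x - W x) := by
  refine ⟨W + t • (V - W), (convex_Adm hΩ).add_smul_sub_mem hW hV ht, ?_, ?_⟩ <;>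
    rw [← integral_const_mul] <;> congr 1 <;> ext x <;>
    simp only [Pi.add_apply, Pi.smul_apply, Pi.sub_apply, smul_eq_mul, add_sub_cancel_left]
  · rw [abs_mul, abs_of_nonneg ht.1]
  · ring

end Admissible

theorem quantitative_bathtub_reduction_equiv_general
    (d : ℕ)
    (Ω : Set (EuclideanSpace ℝ (Fin d)))
    (hΩb : Bornology.IsBounded Ω)
    (V₀ : ℝ)
    (f : EuclideanSpace ℝ (Fin d) → ℝ) (hf : IntegrableOn f Ω)
    (Vf : EuclideanSpace ℝ (Fin d) → ℝ)
    (hVfM : Vf ∈ Adm d Ω V₀) :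
    (∃ c > 0, ∀ V ∈ Adm d Ω V₀,
        (∫ x in Ω, f x * V x) ≤
          (∫ x in Ω, f x * Vf x) - c * (∫ x in Ω, |V x - Vf x|) ^ 2) ↔
    (Filter.limsup
        (fun δ : ℝ =>
          ⨆ V ∈ { V ∈ Adm d Ω V₀ | (∫ x in Ω, |V x - Vf x|) = δ },
            (((∫ x in Ω, f x * (V x - Vf x)) / δ ^ 2 : ℝ) : EReal))
        (nhdsWithin 0 (Set.Ioi 0)) < 0) := by
  have hΩ : volume Ω < ⊤ := hΩb.measure_lt_top
  change _ ↔ limsup (normalizedDeficit (Adm d Ω V₀) (fun V => ∫ x in Ω, f x * (V x - Vf x))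
    (fun V => ∫ x in Ω, |V x - Vf x|)) (𝓝[>] 0) < 0
  rw [← exists_le_neg_mul_sq_iff_limsup_normalizedDeficit_neg
    (fun _ _ => integral_nonneg fun _ => abs_nonneg _)
    (fun _ hV => integral_abs_sub_le_of_mem_Adm hΩ hV hVfM)
    (fun _ hV h0 => (integral_mul_sub_eq_zero_of_integral_abs_sub_eq_zero hΩ hV hVfM h0).le)
    (fun _ hV _ ht => exists_mem_Adm_scaled hΩ hV hVfM f (Ioc_subset_Icc_self ht))]
  refine exists_congr fun c => and_congr_right fun _ => forall₂_congr fun V hV => ?_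
  rw [integral_mul_sub_of_mem_Adm hf hV hVfM]
  constructor <;> intro h <;> linarith

/-- The quantitative bathtub inequality for `f` at `V_f = 1_{{f > μ}}` holds if and only
if the normalised deficit `δ⁻² sup{∫_Ω f (V − V_f) : V ∈ M, ‖V − V_f‖_{L¹} = δ}` has
negative limsup as `δ → 0⁺` (the inner supremum being `−∞` when the constraint set is
empty). -/
theorem quantitative_bathtub_reduction_equiv
    (d : ℕ) (hd : 1 ≤ d)
    (Ω : Set (EuclideanSpace ℝ (Fin d))) (hΩo : IsOpen Ω) (hΩne : Ω.Nonempty)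
    (hΩb : Bornology.IsBounded Ω)
    (V₀ : ℝ) (hV₀ : 0 < V₀) (hV₀' : V₀ < (volume Ω).toReal)
    (f : EuclideanSpace ℝ (Fin d) → ℝ) (hf : IntegrableOn f Ω)
    (μ : ℝ)
    (hμ₁ : volume {x ∈ Ω | μ < f x} = ENNReal.ofReal V₀)
    (hμ₂ : volume {x ∈ Ω | f x = μ} = 0)
    (Vf : EuclideanSpace ℝ (Fin d) → ℝ)
    (hVf : Vf = Set.indicator {x ∈ Ω | μ < f x} (fun _ => (1 : ℝ)))
    (hVfM : Vf ∈ Adm d Ω V₀) :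
    (∃ c > 0, ∀ V ∈ Adm d Ω V₀,
        (∫ x in Ω, f x * V x) ≤
          (∫ x in Ω, f x * Vf x) - c * (∫ x in Ω, |V x - Vf x|) ^ 2) ↔
    (Filter.limsup
        (fun δ : ℝ =>
          ⨆ V ∈ { V ∈ Adm d Ω V₀ | (∫ x in Ω, |V x - Vf x|) = δ },
            (((∫ x in Ω, f x * (V x - Vf x)) / δ ^ 2 : ℝ) : EReal))
        (nhdsWithin 0 (Set.Ioi 0)) < 0) :=
  quantitative_bathtub_reduction_equiv_general d Ω hΩb V₀ f hf Vf hVfM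
end
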